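/- Let |A| = k ≥ 2 and n ≥ 1, and let P ⊆ nA* be a finite joinless code. Then: (1) μ(P) ≤ 1; (2) P is maximal as a joinless code if and only if μ(P) = 1. -/

import Mathlib

namespace BrinThompson

abbrev W (A : Type*) (n : ℕ) : Type _ := Fin n → List A

variable {A : Type*} {n : ℕ}

/-- Coordinatewise concatenation in `nA*`. -/
def cat (u x : W A n) : W A n := fun i => u i ++ x i

/-- `u ≤_init v` : `u` is an initial factor of `v`. -/
def initLE (u v : W A n) : Prop := ∃ x : W A n, v = cat u x

/-- `w` is the join (least upper bound) of `u` and `v` w.r.t. `≤_init`. -/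
def isJoin (u v w : W A n) : Prop :=
  initLE u w ∧ initLE v w ∧ ∀ z : W A n, initLE u z → initLE v z → initLE w z

/-- `u` and `v` have a join. -/
def HasJoin (u v : W A n) : Prop := ∃ w : W A n, isJoin u v w

/-- A joinless code: no two distinct elements have a join. -/
def JoinlessCode (S : Set (W A n)) : Prop :=
  ∀ u ∈ S, ∀ v ∈ S, u ≠ v → ¬ HasJoin u v

/-- A maximal joinless code: joinless, and every element of `nA*` has a join
with some element of the code. -/
def MaxJoinlessCode (S : Set (W A n)) : Prop :=
  JoinlessCode S ∧ ∀ x : W A n, ∃ p ∈ S, HasJoin x p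

/-- The right ideal `C · nA*` generated by `C`. -/
def genIdeal (C : Set (W A n)) : Set (W A n) := {w | ∃ c ∈ C, ∃ x : W A n, w = cat c x}

def IsRightIdeal (R : Set (W A n)) : Prop := genIdeal R = R

/-- An initial factor code: pairwise `≤_init`-incomparable set. -/
def InitFactorCode (S : Set (W A n)) : Prop :=
  ∀ u ∈ S, ∀ v ∈ S, initLE u v → u = v

/-- `A_{ε,n}`: tuples with one coordinate a single letter and the rest empty. -/
def Aeps (A : Type*) (n : ℕ) : Set (W A n) :=
  {w | ∃ i : Fin n, ∃ a : A, w i = [a] ∧ ∀ j : Fin n, j ≠ i → w j = []}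

/-- `(ε)^n`, the tuple of empty strings. -/
def epsn (A : Type*) (n : ℕ) : W A n := fun _ => []

/-- `nA^ω`: `n`-tuples of one-sided infinite sequences over `A`. -/
abbrev Winf (A : Type*) (n : ℕ) : Type _ := Fin n → ℕ → A

/-- Concatenation of a finite tuple `p ∈ nA*` with an infinite tuple `u ∈ nA^ω`. -/
def catInf (p : W A n) (u : Winf A n) : Winf A n :=
  fun i k => if h : k < (p i).length then (p i).get ⟨k, h⟩ else u i (k - (p i).length)

/-- `v` is an interior vertex of the `P`-dag: a strict initial factor of
some element of `P`. -/
def Interior (P : Set (W A n)) (v : W A n) : Prop := ∃ p ∈ P, initLE v p ∧ v ≠ p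

/-- The child of `v` in direction `i`, extended by letter `a`. -/
def child (v : W A n) (i : Fin n) (a : A) : W A n := Function.update v i (v i ++ [a])

/-- A leaf of the interior dag of `P`: an interior vertex none of whose
children is interior. -/
def InteriorLeaf (P : Set (W A n)) (v : W A n) : Prop :=
  Interior P v ∧ ∀ (i : Fin n) (a : A), ¬ Interior P (child v i a)

/-- `v_+ = (v · A_{ε,n}) ∩ P`, the set of children of `v` belonging to `P`. -/
def vplus (P : Set (W A n)) (v : W A n) : Set (W A n) :=
  {w | (∃ (i : Fin n) (a : A), w = child v i a) ∧ w ∈ P}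

/-- The depth of a vertex: the sum of the coordinate lengths. -/
def depth (v : W A n) : ℕ := ∑ i, (v i).length

/-- One-step restriction of `P` at `(p, i)`. -/
def oneStep (P : Set (W A n)) (p : W A n) (i : Fin n) : Set (W A n) :=
  (P \ {p}) ∪ {w | ∃ a : A, w = child p i a}

/-- One step in a sequence of one-step restrictions. -/
def RestrStep (P Q : Set (W A n)) : Prop := ∃ p ∈ P, ∃ i : Fin n, Q = oneStep P p i

/-- The box code `A^{k_1} × … × A^{k_n}`. -/
def box (A : Type*) {n : ℕ} (k : Fin n → ℕ) : Set (W A n) :=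
  {w | ∀ i : Fin n, (w i).length = k i}

/-- Elementwise join `P ∨ Q` of two sets, ranging over the joins that exist. -/
def setJoin (P Q : Set (W A n)) : Set (W A n) :=
  {w | ∃ p ∈ P, ∃ q ∈ Q, isJoin p q w}

/-- `ℓ(S)`: the maximum coordinate length occurring in `S`. -/
noncomputable def ell (S : Set (W A n)) : ℕ :=
  sSup {m | ∃ z ∈ S, ∃ i : Fin n, (z i).length = m}

/-- An element of `n RI^fin_A`: an injective right ideal morphism of `nA*`
whose domain code and image code are finite maximal joinless codes.
`toFun` is a total function whose values outside `Dom` are irrelevant. -/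
structure RIMfin (A : Type*) (n : ℕ) where
  Dom : Set (W A n)
  toFun : W A n → W A n
  domC : Set (W A n)
  imC : Set (W A n)
  ideal : IsRightIdeal Dom
  morph : ∀ x ∈ Dom, ∀ w : W A n, toFun (cat x w) = cat (toFun x) w
  inj : Set.InjOn toFun Dom
  domC_gen : genIdeal domC = Dom
  imC_gen : genIdeal imC = toFun '' Dom
  domC_fin : domC.Finite
  domC_max : MaxJoinlessCode domC
  imC_fin : imC.Finite
  imC_max : MaxJoinlessCode imC

/-- `ℓ(f) = max{ℓ(z) : z ∈ domC(f) ∪ imC(f)}`. -/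
noncomputable def ellF (F : RIMfin A n) : ℕ := ell (F.domC ∪ F.imC)

/-- `G` extends `F` (as partial functions). -/
def Extends (F G : RIMfin A n) : Prop :=
  F.Dom ⊆ G.Dom ∧ ∀ x ∈ F.Dom, G.toFun x = F.toFun x

/-- `F` and `G` are equal as partial functions. -/
def EquivRIM (F G : RIMfin A n) : Prop :=
  F.Dom = G.Dom ∧ ∀ x ∈ F.Dom, F.toFun x = G.toFun x

/-- `G` is a maximal extension of `F` in `n RI^fin_A`. -/
def MaxExtension (F G : RIMfin A n) : Prop :=
  Extends F G ∧ ∀ H : RIMfin A n, Extends G H → EquivRIM G H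


/-! Fix `L` bounding every coordinate length occurring in `P`, and view `(Fin n → A^L)`, of size
`k^(nL)`, as a finite model of `nA^ω`. The level-`L` tuples extending `p ∈ P` form a cylinder of
exactly `k^(nL) μ(p)` elements. Since joins in `nA*` exist exactly for pairs with a common upper
bound, `P` is joinless iff these cylinders are pairwise disjoint, and then `P` is maximal iff they
cover all level-`L` tuples. Hence `k^(nL) μ(P)` counts the covered tuples. -/

theorem initLE_iff_forall_prefix {u v : W A n} : initLE u v ↔ ∀ i, u i <+: v i := by
  constructor
  · rintro ⟨x, rfl⟩ i
    exact List.prefix_append _ _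
  · intro h
    exact ⟨fun i => (v i).drop (u i).length,
      funext fun i => (List.prefix_iff_eq_append.1 (h i)).symm⟩

theorem hasJoin_iff_exists_initLE {u v : W A n} :
    HasJoin u v ↔ ∃ z, initLE u z ∧ initLE v z := by
  refine ⟨fun ⟨w, hu, hv, _⟩ => ⟨w, hu, hv⟩, fun ⟨z, hu, hv⟩ => ?_⟩
  rw [initLE_iff_forall_prefix] at hu hv
  -- The join takes, in each coordinate, the longer of the two (comparable) words.
  refine ⟨fun i => if (u i).length ≤ (v i).length then v i else u i, ?_, ?_, ?_⟩
  all_goals simp only [initLE_iff_forall_prefix]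
  · intro i
    split_ifs with h
    · exact List.prefix_of_prefix_length_le (hu i) (hv i) h
    · exact List.prefix_rfl
  · intro i
    split_ifs with h
    · exact List.prefix_rfl
    · exact List.prefix_of_prefix_length_le (hv i) (hu i) (by omega)
  · intro y huy hvy i
    split_ifs
    exacts [hvy i, huy i]

theorem exists_forall_length_le_of_finite {P : Set (W A n)} (hP : P.Finite) :
    ∃ L, ∀ p ∈ P, ∀ i, (p i).length ≤ L := by
  obtain ⟨L, hL⟩ := (hP.image depth).bddAbove
  exact ⟨L, fun p hp i =>
    (Finset.single_le_sum (fun _ _ => Nat.zero_le _) (Finset.mem_univ i)).trans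
      (hL ⟨p, hp, rfl⟩)⟩

theorem card_vector_prefix [Fintype A] [DecidableEq A] {L : ℕ} {w : List A}
    (hw : w.length ≤ L) :
    Fintype.card {v : List.Vector A L // w <+: v.toList} = Fintype.card A ^ (L - w.length) := by
  rw [← card_vector]
  refine Fintype.card_congr
    { toFun := fun v => ⟨v.1.toList.drop w.length, by simp⟩
      invFun := fun x => ⟨⟨w ++ x.toList, by simp; omega⟩, List.prefix_append _ _⟩
      left_inv := fun v => ?_
      right_inv := fun x => ?_ }
  · exact Subtype.ext (List.Vector.eq _ _ (List.prefix_iff_eq_append.1 v.2))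
  · exact List.Vector.eq _ _ (by simp)

section Cylinder

variable [Fintype A] [DecidableEq A]

def cylinder (L : ℕ) (p : W A n) : Finset (Fin n → List.Vector A L) :=
  {f | ∀ i, p i <+: (f i).toList}

theorem mem_cylinder {L : ℕ} {p : W A n} {f : Fin n → List.Vector A L} :
    f ∈ cylinder L p ↔ initLE p (fun i => (f i).toList) := by
  rw [cylinder, Finset.mem_filter, initLE_iff_forall_prefix]
  simp

theorem card_cylinder {L : ℕ} {p : W A n} (hp : ∀ i, (p i).length ≤ L) :
    (cylinder L p).card = Fintype.card A ^ ∑ i, (L - (p i).length) := by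
  rw [cylinder, ← Fintype.card_subtype,
    Fintype.card_congr
      (Equiv.subtypePiEquivPi (p := fun i (v : List.Vector A L) => p i <+: v.toList)),
    Fintype.card_pi, ← Finset.prod_pow_eq_pow_sum]
  exact Finset.prod_congr rfl fun i _ => card_vector_prefix (hp i)

theorem inv_pow_depth_eq_card_cylinder_div [Nonempty A] {L : ℕ} {p : W A n}
    (hp : ∀ i, (p i).length ≤ L) :
    ((Fintype.card A : ℝ) ^ depth p)⁻¹ =
      (cylinder L p).card / (Fintype.card A : ℝ) ^ (n * L) := by
  have hk : (Fintype.card A : ℝ) ≠ 0 := by positivity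
  have hexp : ∑ i, (L - (p i).length) + depth p = n * L := by
    rw [depth, ← Finset.sum_add_distrib,
      Finset.sum_congr rfl fun i _ => Nat.sub_add_cancel (hp i)]
    simp
  rw [card_cylinder hp, ← hexp, pow_add]
  push_cast
  field_simp

theorem JoinlessCode.pairwiseDisjoint_cylinder {P : Set (W A n)} (hP : JoinlessCode P)
    (L : ℕ) : P.PairwiseDisjoint (cylinder L) := by
  intro p hp q hq hpq
  refine Finset.disjoint_left.2 fun f hfp hfq => hP p hp q hq hpq ?_
  exact hasJoin_iff_exists_initLE.2 ⟨_, mem_cylinder.1 hfp, mem_cylinder.1 hfq⟩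

theorem sum_inv_pow_depth_eq_card_biUnion_div [Nonempty A] {P : Finset (W A n)}
    (hP : JoinlessCode (P : Set (W A n))) {L : ℕ} (hL : ∀ p ∈ P, ∀ i, (p i).length ≤ L) :
    ∑ p ∈ P, ((Fintype.card A : ℝ) ^ depth p)⁻¹ =
      (P.biUnion (cylinder L)).card / (Fintype.card A : ℝ) ^ (n * L) := by
  rw [Finset.card_biUnion (hP.pairwiseDisjoint_cylinder L), Nat.cast_sum, Finset.sum_div]
  exact Finset.sum_congr rfl fun p hp => inv_pow_depth_eq_card_cylinder_div (hL p hp)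

theorem maxJoinlessCode_iff_biUnion_cylinder_eq_univ [Nonempty A] {P : Finset (W A n)}
    (hP : JoinlessCode (P : Set (W A n))) {L : ℕ} (hL : ∀ p ∈ P, ∀ i, (p i).length ≤ L) :
    MaxJoinlessCode (P : Set (W A n)) ↔ P.biUnion (cylinder L) = Finset.univ := by
  simp only [MaxJoinlessCode, hP, true_and, Finset.eq_univ_iff_forall, Finset.mem_biUnion,
    Finset.mem_coe, mem_cylinder, initLE_iff_forall_prefix, hasJoin_iff_exists_initLE]
  constructor
  · intro hmax f
    obtain ⟨p, hp, z, hfz, hpz⟩ := hmax fun i => (f i).toList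
    exact ⟨p, hp, fun i =>
      List.prefix_of_prefix_length_le (hpz i) (hfz i) (by simpa using hL p hp i)⟩
  · intro hcover x
    -- Pad or truncate `x` to level `L`; both it and `x` are prefixes of the padded word.
    obtain ⟨a⟩ := ‹Nonempty A›
    let padded : W A n := fun i => x i ++ List.replicate L a
    obtain ⟨p, hp, hpf⟩ := hcover fun i => ⟨(padded i).take L, by simp [padded]⟩
    exact ⟨p, hp, padded, fun i => List.prefix_append _ _,
      fun i => (hpf i).trans (List.take_prefix _ _)⟩

end Cylinder

theorem kraft_inequality_general {A : Type*} [Fintype A] (hA : 2 ≤ Fintype.card A)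
    {n : ℕ} (P : Set (W A n)) (hP : P.Finite)
    (hjl : JoinlessCode P) :
    (∑ x ∈ hP.toFinset, ((Fintype.card A : ℝ) ^ (∑ i, (x i).length))⁻¹ ≤ 1) ∧
    (MaxJoinlessCode P ↔
      ∑ x ∈ hP.toFinset, ((Fintype.card A : ℝ) ^ (∑ i, (x i).length))⁻¹ = 1) := by
  classical
  have : Nonempty A := Fintype.card_pos_iff.1 (by omega)
  obtain ⟨L, hL⟩ := exists_forall_length_le_of_finite hP
  have hjl' : JoinlessCode (hP.toFinset : Set (W A n)) := by rwa [hP.coe_toFinset]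
  have hL' : ∀ p ∈ hP.toFinset, ∀ i, (p i).length ≤ L := by simpa using hL
  have hsum := sum_inv_pow_depth_eq_card_biUnion_div hjl' hL'
  have hmax := maxJoinlessCode_iff_biUnion_cylinder_eq_univ hjl' hL'
  have hpos : (0 : ℝ) < (Fintype.card A : ℝ) ^ (n * L) := by positivity
  have hcard :
      (Fintype.card (Fin n → List.Vector A L) : ℝ) = (Fintype.card A : ℝ) ^ (n * L) := by
    simp [card_vector, pow_mul']
  rw [hP.coe_toFinset] at hmax
  simp only [depth] at hsum
  rw [hsum, hmax, div_le_one hpos, div_eq_one_iff_eq hpos.ne', ← hcard, Nat.cast_le, Nat.cast_inj,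
    Finset.card_eq_iff_eq_univ]
  exact ⟨Finset.card_le_univ _, Iff.rfl⟩

/-- The `n`-dimensional Kraft (in)equality: for a finite joinless code `P`,
`μ(P) ≤ 1`, with equality iff `P` is a maximal joinless code. -/
theorem kraft_inequality {A : Type*} [Fintype A] (hA : 2 ≤ Fintype.card A)
    {n : ℕ} (hn : 1 ≤ n) (P : Set (W A n)) (hP : P.Finite)
    (hjl : JoinlessCode P) :
    (∑ x ∈ hP.toFinset, ((Fintype.card A : ℝ) ^ (∑ i, (x i).length))⁻¹ ≤ 1) ∧
    (MaxJoinlessCode P ↔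
      ∑ x ∈ hP.toFinset, ((Fintype.card A : ℝ) ^ (∑ i, (x i).length))⁻¹ = 1) :=
  kraft_inequality_general hA P hP hjl

end BrinThompson
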